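/- arXiv:0904.3884 — 5 statements merged into one kernel-verified Lean document; each statement's English description precedes it below -/
import Mathlib

section
/- Let L be a field equipped with a nonarchimedean multiplicative absolute value |·| : L → ℝ≥0 (so |ab| = |a||b| and |a+b| ≤ max(|a|,|b|)). For monic polynomials p, q ∈ L[z], the spectral value satisfies σ(p·q) = max{σ(p), σ(q)}. -/
open Polynomial

/-- The spectral value of a monic polynomial `p(z) = z^n + c_1 z^{n-1} + ⋯ + c_n`
with respect to an absolute value `v`, namely `max_{1 ≤ i ≤ n} v(c_i)^(1/i)`
(the coefficient `c_i` sits in degree `n - i`). -/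
noncomputable def spectralVal {L : Type*} [Field L] (v : L → NNReal)
    (p : Polynomial L) : NNReal :=
  (Finset.range p.natDegree).sup fun j =>
    v (p.coeff j) ^ ((((p.natDegree - j : ℕ) : ℝ))⁻¹)

/-! With `B > 0` fixed, `σ(p) ≤ B` says exactly that the Gauss norm `max_i |p_i| B^i` of the monic
polynomial `p` of degree `n` equals `B^n`, its smallest possible value (attained at the leading
coefficient). The Gauss norm of a nonarchimedean absolute value is multiplicative, so
`‖pq‖_B = B^(n+m)` holds iff `‖p‖_B = B^n` and `‖q‖_B = B^m`. Hence `σ(pq) ≤ B ↔ σ(p) ≤ B ∧ σ(q) ≤ B`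
for every `B > 0`, which determines `σ(pq)`. -/

open NNReal

theorem NNReal.eq_of_forall_pos_le_iff {x y : ℝ≥0} (h : ∀ B, 0 < B → (x ≤ B ↔ y ≤ B)) : x = y :=
  le_antisymm
    (le_of_forall_gt_imp_ge_of_dense fun B hB => (h B (pos_of_gt hB)).2 hB.le)
    (le_of_forall_gt_imp_ge_of_dense fun B hB => (h B (pos_of_gt hB)).1 hB.le)

def AbsoluteValue.ofNonarchimedean {R : Type*} [Semiring R] (v : R → ℝ≥0)
    (hv0 : ∀ a, v a = 0 ↔ a = 0) (hvmul : ∀ a b, v (a * b) = v a * v b)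
    (hvadd : ∀ a b, v (a + b) ≤ max (v a) (v b)) : AbsoluteValue R ℝ where
  toFun a := v a
  map_mul' a b := by simp only [hvmul, NNReal.coe_mul]
  nonneg' a := (v a).2
  eq_zero' a := by simp only [NNReal.coe_eq_zero, hv0]
  add_le' a b := by exact_mod_cast (hvadd a b).trans (max_le_add_of_nonneg (v a).2 (v b).2)

namespace AbsoluteValue.ofNonarchimedean

variable {R : Type*} [Semiring R] {v : R → ℝ≥0} {hv0 : ∀ a, v a = 0 ↔ a = 0}
  {hvmul : ∀ a b, v (a * b) = v a * v b} {hvadd : ∀ a b, v (a + b) ≤ max (v a) (v b)}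

@[simp]
theorem apply (a : R) : ofNonarchimedean v hv0 hvmul hvadd a = v a := rfl

theorem isNonarchimedean : IsNonarchimedean (ofNonarchimedean v hv0 hvmul hvadd) := fun a b => by
  simpa only [apply, ← NNReal.coe_max, NNReal.coe_le_coe] using hvadd a b

end AbsoluteValue.ofNonarchimedean

theorem Polynomial.gaussNorm_le_iff {R F : Type*} [Semiring R] [FunLike F R ℝ]
    [ZeroHomClass F R ℝ] [NonnegHomClass F R ℝ] {v : F} {c C : ℝ} {p : R[X]} (hc : 0 ≤ c) :
    p.gaussNorm v c ≤ C ↔ ∀ i, v (p.coeff i) * c ^ i ≤ C := by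
  refine ⟨fun h i => (p.le_gaussNorm v hc i).trans h, fun h => ?_⟩
  rw [← gaussNorm_coe_powerSeries _ _ hc, PowerSeries.gaussNorm_eq]
  exact ciSup_le fun i => by simpa only [coeff_coe] using h i

theorem Polynomial.Monic.pow_natDegree_le_gaussNorm {R : Type*} [Semiring R] [IsDomain R]
    (w : AbsoluteValue R ℝ) {c : ℝ} (hc : 0 ≤ c) {p : R[X]} (hp : p.Monic) :
    c ^ p.natDegree ≤ p.gaussNorm w c := by
  simpa only [hp.coeff_natDegree, map_one, one_mul] using p.le_gaussNorm w hc p.natDegree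

section spectralVal

variable {L : Type*} [Field L] {v : L → ℝ≥0} {p : L[X]} {B : ℝ≥0}

theorem spectralVal_le_iff :
    spectralVal v p ≤ B ↔ ∀ j < p.natDegree, v (p.coeff j) ≤ B ^ (p.natDegree - j) := by
  simp only [spectralVal, Finset.sup_le_iff, Finset.mem_range]
  refine forall₂_congr fun j hj => ?_
  rw [NNReal.rpow_inv_le_iff (by exact_mod_cast Nat.sub_pos_of_lt hj), NNReal.rpow_natCast]

theorem spectralVal_le_iff_gaussNorm_eq (w : AbsoluteValue L ℝ) (hw : ∀ a, w a = v a)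
    (hp : p.Monic) (hB : 0 < B) :
    spectralVal v p ≤ B ↔ p.gaussNorm w B = (B : ℝ) ^ p.natDegree := by
  set n := p.natDegree
  have hB' : (0 : ℝ) < B := hB
  have lower := hp.pow_natDegree_le_gaussNorm w hB'.le
  have term_iff : ∀ j < n, w (p.coeff j) * (B : ℝ) ^ j ≤ (B : ℝ) ^ n ↔
      v (p.coeff j) ≤ B ^ (n - j) := fun j hj => by
    rw [hw, ← pow_sub_mul_pow (B : ℝ) hj.le, mul_le_mul_iff_left₀ (pow_pos hB' j)]
    norm_cast
  have term_top : ∀ j, n ≤ j → w (p.coeff j) * (B : ℝ) ^ j ≤ (B : ℝ) ^ n := fun j hj => by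
    rcases hj.eq_or_lt with rfl | hlt
    · rw [hp.coeff_natDegree, map_one, one_mul]
    · rw [coeff_eq_zero_of_natDegree_lt hlt, map_zero, zero_mul]
      positivity
  rw [spectralVal_le_iff, ← lower.ge_iff_eq', gaussNorm_le_iff hB'.le]
  refine ⟨fun h j => ?_, fun h j hj => (term_iff j hj).1 (h j)⟩
  rcases lt_or_ge j n with hj | hj
  · exact (term_iff j hj).2 (h j hj)
  · exact term_top j hj

end spectralVal

/-- For a nonarchimedean multiplicative absolute value, the spectral value of a
product of monic polynomials is the maximum of the spectral values. -/
theorem spectralVal_mul {L : Type*} [Field L] (v : L → NNReal)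
    (hv0 : ∀ a, v a = 0 ↔ a = 0)
    (hvmul : ∀ a b, v (a * b) = v a * v b)
    (hvadd : ∀ a b, v (a + b) ≤ max (v a) (v b))
    (p q : Polynomial L) (hp : p.Monic) (hq : q.Monic) :
    spectralVal v (p * q) = max (spectralVal v p) (spectralVal v q) := by
  set w := AbsoluteValue.ofNonarchimedean v hv0 hvmul hvadd
  have hw : ∀ a, w a = v a := AbsoluteValue.ofNonarchimedean.apply
  refine eq_of_forall_pos_le_iff fun B hB => ?_
  have hB' : (0 : ℝ) < B := hB
  have lower_p := hp.pow_natDegree_le_gaussNorm w hB'.le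
  have lower_q := hq.pow_natDegree_le_gaussNorm w hB'.le
  rw [max_le_iff, spectralVal_le_iff_gaussNorm_eq w hw (hp.mul hq) hB,
    spectralVal_le_iff_gaussNorm_eq w hw hp hB, spectralVal_le_iff_gaussNorm_eq w hw hq hB,
    gaussNorm_mul AbsoluteValue.ofNonarchimedean.isNonarchimedean hB', hp.natDegree_mul hq,
    pow_add]
  simpa only [eq_comm] using mul_eq_mul_iff_eq_and_eq_of_pos lower_p lower_q
    (pow_pos hB' _) ((pow_pos hB' _).trans_le lower_q)
end

section
/- Let K be a field, O a valuation subring of K, and B a finite-dimensional (associative, unital) K-algebra. For b ∈ B, let χ_b ∈ K[z] denote the characteristic polynomial of the K-linear endomorphism of B given by left multiplication by b. Then b is integral over O (i.e. b satisfies a monic polynomial whose coefficients lie in the image of O in B) if and only if all coefficients of χ_b lie in O. -/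
open Polynomial

/-!
The direction `←` is Cayley–Hamilton. For `→`, pass to an algebraic closure of `K`: every root
of `χ_b` is an eigenvalue of multiplication by `b`, hence a root of the monic `O`-polynomial
killing `b`, hence integral over `O`. The coefficients of `χ_b` are symmetric functions of these
roots, so they are integral over `O`, and a valuation ring is integrally closed in `K`.
-/

theorem spectrum.isRoot_of_aeval_eq_zero {𝕜 A : Type*} [Field 𝕜] [Ring A]
    [Algebra 𝕜 A] {a : A} {p : 𝕜[X]} (hp : aeval a p = 0) {r : 𝕜} (hr : r ∈ spectrum 𝕜 a) :
    p.IsRoot r := by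
  have h := spectrum.subset_polynomial_aeval a p ⟨r, hr, rfl⟩
  rw [hp, spectrum.mem_iff, sub_zero] at h
  by_contra hne
  exact h ((Ne.isUnit hne).map (algebraMap 𝕜 A))

theorem LinearMap.isIntegral_charpoly_coeff_of_aeval_eq_zero {R K V : Type*} [CommRing R]
    [Field K] [Algebra R K] [AddCommGroup V] [Module K V] [FiniteDimensional K V]
    (f : Module.End K V) {P : R[X]} (hP : P.Monic) (hfP : aeval f (P.map (algebraMap R K)) = 0)
    (i : ℕ) : IsIntegral R (f.charpoly.coeff i) := by
  let L := AlgebraicClosure K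
  have hPL : aeval (f.baseChange L) (P.map (algebraMap R L)) = 0 := by
    rw [IsScalarTower.algebraMap_eq R K L, ← Polynomial.map_map, aeval_map_algebraMap]
    exact (aeval_algHom_apply (Module.End.baseChangeHom K L V) f _).trans (by rw [hfP, map_zero])
  have hroots (x : L) (hx : (f.charpoly.map (algebraMap K L)).IsRoot x) : IsIntegral R x := by
    rw [← LinearMap.charpoly_baseChange, ← Module.End.mem_spectrum_iff_isRoot_charpoly] at hx
    exact ⟨P, hP, by
      simpa [eval_map_algebraMap, ← aeval_def] using spectrum.isRoot_of_aeval_eq_zero hPL hx⟩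
  have hL : IsIntegral R (algebraMap K L (f.charpoly.coeff i)) := by
    rw [← coeff_map]
    refine isIntegral_coeff_of_factors _ ?_ (IsAlgClosed.splits _) hroots i
    simp [(f.charpoly_monic.map _).leadingCoeff, isIntegral_one]
  exact (isIntegral_algHom_iff (IsScalarTower.toAlgHom R K L) (algebraMap K L).injective).mp hL

/-- An element `b` of a finite-dimensional `K`-algebra is integral over a
valuation subring `O` of `K` if and only if the coefficients of the
characteristic polynomial of left multiplication by `b` all lie in `O`. -/
theorem integral_iff_charpoly_coeff_mem (K B : Type*) [Field K] [Ring B]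
    [Algebra K B] [FiniteDimensional K B] (O : ValuationSubring K) (b : B) :
    (∃ P : Polynomial K, P.Monic ∧ (∀ i, P.coeff i ∈ O) ∧ aeval b P = 0) ↔
      ∀ i, (LinearMap.charpoly (LinearMap.mulLeft K b)).coeff i ∈ O := by
  constructor
  · rintro ⟨P, hP, hPO, hPb⟩ i
    obtain ⟨Q, hQP, -, hQ⟩ := lifts_and_natDegree_eq_and_monic
      ((lifts_iff_coeff_lifts (f := algebraMap O K) P).2 fun n => ⟨(⟨_, hPO n⟩ : O), rfl⟩) hP
    have hfQ : aeval (LinearMap.mulLeft K b) (Q.map (algebraMap O K)) = 0 := by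
      rw [hQP]
      exact (aeval_algHom_apply (Algebra.lmul K B) b P).trans (by rw [hPb, map_zero])
    obtain ⟨c, hc⟩ := IsIntegrallyClosed.isIntegral_iff.mp
      (LinearMap.isIntegral_charpoly_coeff_of_aeval_eq_zero _ hQ hfQ i)
    exact hc ▸ c.2
  · exact fun h => ⟨_, LinearMap.charpoly_monic _, h, Algebra.aeval_self_charpoly_lmul b⟩
end

section
/- Let X be a topological space, let x ≠ y be two points of X, and let U_1, …, U_n be finitely many closed subsets of X, each of which is a Hausdorff topological space in the subspace topology, such that the union U_1 ∪ ⋯ ∪ U_n is a neighborhood of x and a neighborhood of y in X. Then there exist disjoint open subsets V, W of X with x ∈ V and y ∈ W. -/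
/-!
Say that `s` separates `x` and `y` if `𝓝 x ⊓ 𝓝 y ⊓ 𝓟 s = ⊥`, i.e. some neighbourhoods of `x`
and `y` meet only outside `s`. A closed set that is Hausdorff in the subspace topology separates
any two distinct points (if one of them lies outside `s`, use `sᶜ`), and since a finite
intersection of neighbourhoods is a neighbourhood, a finite union of separating sets separates.
A separating set that is a neighbourhood of `x` then forces `𝓝 x ⊓ 𝓝 y = ⊥`.
-/

open Filter Topology

theorem Filter.disjoint_of_disjoint_inf_principal_of_mem {α : Type*} {f g : Filter α}
    {s : Set α} (h : Disjoint (f ⊓ g) (𝓟 s)) (hs : s ∈ f) : Disjoint f g :=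
  disjoint_iff.2 <| h.eq_bot_of_le <| le_principal_iff.2 <| mem_inf_of_left hs

section

variable {X : Type*} [TopologicalSpace X] {x y : X} {s : Set X}

theorem disjoint_nhds_inf_nhds_principal_iUnion {ι : Sort*} [Finite ι] {s : ι → Set X}
    (h : ∀ i, Disjoint (𝓝 x ⊓ 𝓝 y) (𝓟 (s i))) : Disjoint (𝓝 x ⊓ 𝓝 y) (𝓟 (⋃ i, s i)) := by
  simp only [disjoint_principal_right, Set.compl_iUnion] at h ⊢
  exact iInter_mem.2 h

theorem disjoint_nhds_inf_nhds_principal_of_t2Space [T2Space s] (hxy : x ≠ y) (hx : x ∈ s)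
    (hy : y ∈ s) : Disjoint (𝓝 x ⊓ 𝓝 y) (𝓟 s) := by
  have hsep : Disjoint (𝓝 (⟨x, hx⟩ : s)) (𝓝 ⟨y, hy⟩) := disjoint_nhds_nhds.2 (by simpa using hxy)
  have hwithin : 𝓝 x ⊓ 𝓝 y ⊓ 𝓟 s = 𝓝[s] x ⊓ 𝓝[s] y := by
    rw [nhdsWithin, nhdsWithin, inf_inf_inf_comm, inf_idem]
  rw [disjoint_iff, hwithin, nhdsWithin_eq_map_subtype_coe hx, nhdsWithin_eq_map_subtype_coe hy,
    ← map_inf Subtype.val_injective, disjoint_iff.1 hsep, map_bot]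

theorem disjoint_nhds_inf_nhds_principal_of_isClosed [T2Space s] (hs : IsClosed s) (hxy : x ≠ y) :
    Disjoint (𝓝 x ⊓ 𝓝 y) (𝓟 s) := by
  by_cases hx : x ∈ s
  · by_cases hy : y ∈ s
    · exact disjoint_nhds_inf_nhds_principal_of_t2Space hxy hx hy
    · exact (disjoint_principal_right.2 (hs.isOpen_compl.mem_nhds hy)).mono_left inf_le_right
  · exact (disjoint_principal_right.2 (hs.isOpen_compl.mem_nhds hx)).mono_left inf_le_left

theorem exists_open_separation_of_disjoint_nhds (h : Disjoint (𝓝 x) (𝓝 y)) :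
    ∃ V W : Set X, IsOpen V ∧ IsOpen W ∧ x ∈ V ∧ y ∈ W ∧ Disjoint V W := by
  obtain ⟨V, ⟨hxV, hV⟩, W, ⟨hyW, hW⟩, hVW⟩ :=
    ((nhds_basis_opens x).disjoint_iff (nhds_basis_opens y)).1 h
  exact ⟨V, W, hV, hW, hxV, hyW, hVW⟩

end

theorem separated_of_finite_union_closed_hausdorff_general (X : Type*)
    [TopologicalSpace X] (x y : X) (hxy : x ≠ y) (n : ℕ) (U : Fin n → Set X)
    (hclosed : ∀ i, IsClosed (U i)) (hHaus : ∀ i, T2Space (U i))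
    (hx : (⋃ i, U i) ∈ nhds x) :
    ∃ V W : Set X, IsOpen V ∧ IsOpen W ∧ x ∈ V ∧ y ∈ W ∧ Disjoint V W := by
  have hsep : Disjoint (𝓝 x ⊓ 𝓝 y) (𝓟 (⋃ i, U i)) :=
    disjoint_nhds_inf_nhds_principal_iUnion fun i ↦
      disjoint_nhds_inf_nhds_principal_of_isClosed (hclosed i) hxy
  exact exists_open_separation_of_disjoint_nhds
    (disjoint_of_disjoint_inf_principal_of_mem hsep hx)

/-- If two distinct points of a topological space have a common neighborhood
which is a finite union of closed subsets, each Hausdorff in the subspace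
topology, then the two points can be separated by disjoint open sets. -/
theorem separated_of_finite_union_closed_hausdorff (X : Type*)
    [TopologicalSpace X] (x y : X) (hxy : x ≠ y) (n : ℕ) (U : Fin n → Set X)
    (hclosed : ∀ i, IsClosed (U i)) (hHaus : ∀ i, T2Space (U i))
    (hx : (⋃ i, U i) ∈ nhds x) (hy : (⋃ i, U i) ∈ nhds y) :
    ∃ V W : Set X, IsOpen V ∧ IsOpen W ∧ x ∈ V ∧ y ∈ W ∧ Disjoint V W :=
  separated_of_finite_union_closed_hausdorff_general X x y hxy n U hclosed hHaus hx
end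

section
/- Let R → S be a homomorphism of commutative rings making S a finite free R-module, and let B be a commutative S-algebra. Then there exist a commutative R-algebra C and an S-algebra homomorphism u : B → S ⊗_R C with the following universal property: for every commutative R-algebra A and every S-algebra homomorphism φ : B → S ⊗_R A there is a unique R-algebra homomorphism f : C → A such that (id_S ⊗ f) ∘ u = φ. In other words, the functor A ↦ Hom_{S-alg}(B, S ⊗_R A) on commutative R-algebras is corepresentable. -/
open scoped TensorProduct

universe u

/-- The data of a Weil restriction of the affine object corresponding to the
`S`-algebra `B` along `R → S`: an `R`-algebra `C` together with an `S`-algebra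
homomorphism `u : B → S ⊗_R C` through which every `S`-algebra homomorphism
`B → S ⊗_R A` factors uniquely. -/
structure AffineWeilRestriction (R S B : Type u) [CommRing R] [CommRing S]
    [Algebra R S] [CommRing B] [Algebra S B] : Type (u + 1) where
  C : Type u
  [instCommRing : CommRing C]
  [instAlgebra : Algebra R C]
  u : B →ₐ[S] S ⊗[R] C
  universal : ∀ (A : Type u) [CommRing A] [Algebra R A]
    (φ : B →ₐ[S] S ⊗[R] A),
    ∃! f : C →ₐ[R] A, (Algebra.TensorProduct.map (AlgHom.id S S) f).comp u = φ

/-!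
Choose an `R`-basis `e` of `S`. An element of `S ⊗[R] A` is `∑ i, e i ⊗ₜ aᵢ` for unique
`aᵢ ∈ A`, so a map `B → S ⊗[R] A` is a family of coordinates `a_{b,i}`, i.e. an `R`-algebra
map out of the polynomial ring on variables `X_{b,i}`. Such a map is an `S`-algebra
homomorphism iff each of the identities `φ (b + b') = φ b + φ b'`, `φ (b * b') = φ b * φ b'`
and `φ (algebraMap S B s) = algebraMap S _ s` holds coordinatewise. For the generic map
`b ↦ ∑ i, e i ⊗ₜ X_{b,i}` these coordinates are polynomials over `R`, and `C` is the
polynomial ring modulo the ideal they generate.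
-/

namespace WeilRestriction

open Algebra.TensorProduct (map)

section Coordinates

variable {R S : Type*} [CommRing R] [CommRing S] [Algebra R S]
  {ι : Type*} [Fintype ι] [DecidableEq ι] (e : Module.Basis ι R S)

noncomputable def coordEquiv (A : Type*) [AddCommGroup A] [Module R A] :
    S ⊗[R] A ≃ₗ[R] (ι → A) :=
  TensorProduct.equivFinsuppOfBasisLeft e ≪≫ₗ Finsupp.linearEquivFunOnFinite R A ι

lemma coordEquiv_symm_apply {A : Type*} [AddCommGroup A] [Module R A] (a : ι → A) :
    (coordEquiv e A).symm a = ∑ i, e i ⊗ₜ a i := by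
  simp [coordEquiv, Finsupp.sum_fintype]

variable {A A' : Type*} [CommRing A] [Algebra R A] [CommRing A'] [Algebra R A']

lemma map_coordEquiv_symm (g : A →ₐ[R] A') (a : ι → A) :
    map (AlgHom.id S S) g ((coordEquiv e A).symm a) = (coordEquiv e A').symm (g ∘ a) := by
  simp [coordEquiv_symm_apply, map_sum]

lemma coordEquiv_map (g : A →ₐ[R] A') (x : S ⊗[R] A) :
    coordEquiv e A' (map (AlgHom.id S S) g x) = g ∘ coordEquiv e A x := by
  rw [← (coordEquiv e A).symm_apply_apply x, map_coordEquiv_symm, LinearEquiv.apply_symm_apply,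
    LinearEquiv.apply_symm_apply]

end Coordinates

section Defect

def defect (S : Type*) [CommRing S] {B T : Type*} [CommRing B] [Algebra S B] [CommRing T]
    [Algebra S T] (F : B → T) : (B × B) ⊕ (B × B) ⊕ S → T
  | .inl (b, b') => F (b + b') - F b - F b'
  | .inr (.inl (b, b')) => F (b * b') - F b * F b'
  | .inr (.inr s) => F (algebraMap S B s) - algebraMap S T s

variable {S B T T' : Type*} [CommRing S] [CommRing B] [Algebra S B]
  [CommRing T] [Algebra S T] [CommRing T'] [Algebra S T']

lemma map_defect (φ : T →ₐ[S] T') (F : B → T) (k : (B × B) ⊕ (B × B) ⊕ S) :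
    φ (defect S F k) = defect S (φ ∘ F) k := by
  rcases k with ⟨b, b'⟩ | ⟨b, b'⟩ | s <;> simp [defect]

lemma defect_algHom (ψ : B →ₐ[S] T) (k : (B × B) ⊕ (B × B) ⊕ S) : defect S ψ k = 0 := by
  rcases k with ⟨b, b'⟩ | ⟨b, b'⟩ | s <;> simp [defect]

def algHomOfDefectEqZero (F : B → T) (hF : ∀ k, defect S F k = 0) : B →ₐ[S] T where
  toFun := F
  map_add' b b' := by simpa [defect, sub_sub, sub_eq_zero] using hF (.inl (b, b'))
  map_mul' b b' := sub_eq_zero.1 (hF (.inr (.inl (b, b'))))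
  map_zero' := by simpa [defect] using hF (.inl (0, 0))
  map_one' := by simpa [defect, sub_eq_zero] using hF (.inr (.inr 1))
  commutes' s := sub_eq_zero.1 (hF (.inr (.inr s)))

end Defect

section Construction

variable {R S : Type*} [CommRing R] [CommRing S] [Algebra R S]
  {ι : Type*} [Fintype ι] [DecidableEq ι] (e : Module.Basis ι R S)
  (B : Type*) {A : Type*} [CommRing A] [Algebra R A]

noncomputable def generic (b : B) : S ⊗[R] MvPolynomial (B × ι) R :=
  (coordEquiv e _).symm fun i ↦ MvPolynomial.X (b, i)

lemma map_aeval_generic (F : B → S ⊗[R] A) (b : B) :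
    map (AlgHom.id S S) (MvPolynomial.aeval fun p ↦ coordEquiv e A (F p.1) p.2) (generic e B b)
      = F b := by
  rw [generic, map_coordEquiv_symm]
  convert (coordEquiv e A).symm_apply_apply (F b)
  ext i
  simp

variable [CommRing B] [Algebra S B]

noncomputable def coefficientIdeal : Ideal (MvPolynomial (B × ι) R) :=
  Ideal.span (Set.range fun p : ι × ((B × B) ⊕ (B × B) ⊕ S) ↦
    coordEquiv e _ (defect S (generic e B) p.2) p.1)

lemma coefficientIdeal_le_ker_iff (g : MvPolynomial (B × ι) R →ₐ[R] A) :
    coefficientIdeal e B ≤ RingHom.ker g ↔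
      ∀ k, defect S (map (AlgHom.id S S) g ∘ generic e B) k = 0 := by
  simp only [coefficientIdeal, Ideal.span_le, Set.range_subset_iff, SetLike.mem_coe,
    RingHom.mem_ker, Prod.forall]
  rw [forall_comm]
  refine forall_congr' fun k ↦ ?_
  rw [← map_defect, ← (coordEquiv e A).map_eq_zero_iff, coordEquiv_map, funext_iff]
  rfl

abbrev Corep : Type _ := MvPolynomial (B × ι) R ⧸ coefficientIdeal e B

noncomputable def universalHom : B →ₐ[S] S ⊗[R] Corep e B :=
  algHomOfDefectEqZero (map (AlgHom.id S S) (Ideal.Quotient.mkₐ R _) ∘ generic e B)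
    ((coefficientIdeal_le_ker_iff e B _).1 (Ideal.Quotient.mkₐ_ker R _).ge)

lemma coordEquiv_map_universalHom (f : Corep e B →ₐ[R] A) (b : B) (i : ι) :
    coordEquiv e A (map (AlgHom.id S S) f (universalHom e B b)) i
      = f (Ideal.Quotient.mkₐ R _ (MvPolynomial.X (b, i))) := by
  change coordEquiv e A (map _ f (map _ (Ideal.Quotient.mkₐ R _) (generic e B b))) i = _
  rw [coordEquiv_map, coordEquiv_map, generic, LinearEquiv.apply_symm_apply]
  rfl

lemma algHom_ext_of_comp_universalHom {f f' : Corep e B →ₐ[R] A}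
    (h : (map (AlgHom.id S S) f).comp (universalHom e B)
      = (map (AlgHom.id S S) f').comp (universalHom e B)) : f = f' :=
  Ideal.Quotient.algHom_ext R <| MvPolynomial.algHom_ext fun ⟨b, i⟩ ↦ by
    simpa only [AlgHom.comp_apply, coordEquiv_map_universalHom] using
      congr_arg (coordEquiv e A · i) (DFunLike.congr_fun h b)

theorem existsUnique_comp_universalHom (φ : B →ₐ[S] S ⊗[R] A) :
    ∃! f : Corep e B →ₐ[R] A, (map (AlgHom.id S S) f).comp (universalHom e B) = φ := by
  set g := MvPolynomial.aeval (R := R) fun p : B × ι ↦ coordEquiv e A (φ p.1) p.2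
  have hg : map (AlgHom.id S S) g ∘ generic e B = φ := funext (map_aeval_generic e B φ)
  have hker : ∀ x ∈ coefficientIdeal e B, g x = 0 :=
    (coefficientIdeal_le_ker_iff e B g).2 (hg ▸ defect_algHom φ)
  have hfac :
      (map (AlgHom.id S S) (Ideal.Quotient.liftₐ _ g hker)).comp (universalHom e B) = φ := by
    ext b
    change (map _ _ (map _ _ (generic e B b))) = φ b
    rw [← AlgHom.comp_apply, ← Algebra.TensorProduct.map_comp, Ideal.Quotient.liftₐ_comp]
    exact congr_fun hg b
  exact ⟨_, hfac, fun f' hf' ↦ algHom_ext_of_comp_universalHom e B (hf'.trans hfac.symm)⟩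

end Construction

end WeilRestriction

/-- Along a finite free ring map `R → S`, the functor
`A ↦ Hom_{S-alg}(B, S ⊗_R A)` is corepresentable by an `R`-algebra `C`. -/
theorem affine_weil_restriction_exists (R S B : Type u) [CommRing R]
    [CommRing S] [Algebra R S] [Module.Free R S] [Module.Finite R S]
    [CommRing B] [Algebra S B] :
    Nonempty (AffineWeilRestriction R S B) := by
  classical
  let e := Module.Free.chooseBasis R S
  exact ⟨⟨_, WeilRestriction.universalHom e B,
    fun _ _ _ φ ↦ WeilRestriction.existsUnique_comp_universalHom e B φ⟩⟩
end

section
/- Let K be a field equipped with a nonarchimedean multiplicative absolute value, and let L be a finite field extension of K. For x ∈ L, the spectral value of the characteristic polynomial of the K-linear map L → L given by multiplication by x equals the spectral value of the minimal polynomial of x over K (that is, it equals the spectral norm of x). -/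
/-! Multiplication by `x` on `L` is `[L : K(x)]` copies of multiplication by `x` on `K(x)`, so
its characteristic polynomial is `(minpoly K x) ^ [L : K(x)]`. A monic `p` of degree `n` has
`σ(p) ≤ r` (for `r > 0`) exactly when its Gauss norm `max_i |c_i| r^i` at radius `r` is at most
`r^n`. The Gauss norm of a nonarchimedean absolute value is multiplicative, so `p` and `p^e`
satisfy this condition for the same radii. -/

open Polynomial

namespace Matrix

variable {R : Type*} [CommRing R] {n o : Type*} [DecidableEq n] [Fintype n] [DecidableEq o]
  [Fintype o]

theorem charmatrix_blockDiagonal (M : o → Matrix n n R) :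
    charmatrix (blockDiagonal M) = blockDiagonal fun k => charmatrix (M k) := by
  ext ⟨i, k⟩ ⟨j, k'⟩
  rcases eq_or_ne k k' with rfl | hk
  · by_cases hij : i = j
    · subst hij
      simp
    · simp [charmatrix_apply_ne, hij]
  · rw [charmatrix_apply_ne _ _ _ (by simp [hk]), blockDiagonal_apply_ne _ _ _ hk,
      blockDiagonal_apply_ne _ _ _ hk, map_zero, neg_zero]

theorem charpoly_blockDiagonal (M : o → Matrix n n R) :
    (blockDiagonal M).charpoly = ∏ k, (M k).charpoly := by
  rw [charpoly, charmatrix_blockDiagonal, det_blockDiagonal]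
  rfl

end Matrix

namespace LinearMap

open Module

theorem charpoly_mulLeft_eq_charpoly_leftMulMatrix {R S : Type*} [CommRing R] [Ring S]
    [Algebra R S] [Module.Free R S] [Module.Finite R S] {ι : Type*} [Fintype ι] [DecidableEq ι]
    (b : Basis ι R S) (x : S) :
    (mulLeft R x).charpoly = (Algebra.leftMulMatrix b x).charpoly :=
  (charpoly_toMatrix _ b).symm

theorem charpoly_mulLeft_algebraMap {R S T : Type*} [CommRing R] [CommRing S] [Ring T]
    [Algebra R S] [Algebra S T] [Algebra R T] [IsScalarTower R S T] [Nontrivial S]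
    [Module.Free R S] [Module.Finite R S] [Module.Free S T] [Module.Finite S T]
    [Module.Free R T] [Module.Finite R T] (y : S) :
    (mulLeft R (algebraMap S T y)).charpoly = (mulLeft R y).charpoly ^ finrank S T := by
  classical
  let b := Module.Free.chooseBasis R S
  let c := Module.finBasis S T
  rw [charpoly_mulLeft_eq_charpoly_leftMulMatrix (b.smulTower c),
    Algebra.smulTower_leftMulMatrix_algebraMap, Matrix.charpoly_blockDiagonal,
    charpoly_mulLeft_eq_charpoly_leftMulMatrix b, Finset.prod_const, Finset.card_univ,
    Fintype.card_fin]

open IntermediateField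

theorem charpoly_mulLeft_adjoinSimple_gen {K L : Type*} [Field K] [Field L] [Algebra K L]
    [FiniteDimensional K L] (x : L) :
    (mulLeft K (AdjoinSimple.gen K x)).charpoly = minpoly K x := by
  classical
  let pb := adjoin.powerBasis (IsIntegral.of_finite K x)
  rw [charpoly_mulLeft_eq_charpoly_leftMulMatrix pb.basis]
  exact (charpoly_leftMulMatrix pb).trans (minpoly_gen K x)

theorem charpoly_mulLeft_eq_minpoly_pow {K L : Type*} [Field K] [Field L] [Algebra K L]
    [FiniteDimensional K L] (x : L) :
    (mulLeft K x).charpoly = minpoly K x ^ finrank K⟮x⟯ L := by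
  rw [← AdjoinSimple.algebraMap_gen K x, charpoly_mulLeft_algebraMap,
    charpoly_mulLeft_adjoinSimple_gen, AdjoinSimple.algebraMap_gen]

end LinearMap

namespace AbsoluteValue

variable {R : Type*} [Semiring R] (v : R → NNReal) (hv0 : ∀ a, v a = 0 ↔ a = 0)
  (hvmul : ∀ a b, v (a * b) = v a * v b) (hvadd : ∀ a b, v (a + b) ≤ max (v a) (v b))

def ofNonarchimedean_s11 : AbsoluteValue R ℝ where
  toFun a := v a
  map_mul' a b := by simp [hvmul]
  nonneg' a := (v a).coe_nonneg
  eq_zero' a := by simp [hv0]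
  add_le' a b := by
    exact_mod_cast (hvadd a b).trans (max_le_add_of_nonneg zero_le zero_le)

theorem isNonarchimedean_ofNonarchimedean :
    IsNonarchimedean (ofNonarchimedean_s11 v hv0 hvmul hvadd) := fun a b => by
  exact_mod_cast hvadd a b

end AbsoluteValue

theorem NNReal.eq_of_forall_pos_le_iff_s11 {a b : NNReal} (h : ∀ r, 0 < r → (a ≤ r ↔ b ≤ r)) :
    a = b :=
  le_antisymm (le_of_forall_gt_imp_ge_of_dense fun r hr => (h r (pos_of_gt hr)).2 hr.le)
    (le_of_forall_gt_imp_ge_of_dense fun r hr => (h r (pos_of_gt hr)).1 hr.le)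

namespace Polynomial

theorem gaussNorm_le_iff_s11 {R F : Type*} [Semiring R] [FunLike F R ℝ] [ZeroHomClass F R ℝ]
    [NonnegHomClass F R ℝ] (w : F) {c : ℝ} (hc : 0 ≤ c) (p : R[X]) (B : ℝ) :
    p.gaussNorm w c ≤ B ↔ ∀ i, w (p.coeff i) * c ^ i ≤ B := by
  refine ⟨fun h i => (p.le_gaussNorm w hc i).trans h, fun h => ?_⟩
  obtain ⟨i, hi⟩ := p.exists_eq_gaussNorm w c
  exact hi ▸ h i

theorem gaussNorm_pow {R : Type*} [Ring R] [Nontrivial R] {w : AbsoluteValue R ℝ}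
    (hw : IsNonarchimedean w) {c : ℝ} (hc : 0 < c) (p : R[X]) (e : ℕ) :
    (p ^ e).gaussNorm w c = p.gaussNorm w c ^ e :=
  haveI := gaussNorm_isAbsoluteValue hw hc
  IsAbsoluteValue.abv_pow (gaussNorm w c) p e

variable {K : Type*} [Field K]

theorem spectralVal_le_iff (v : K → NNReal) (p : K[X]) (r : NNReal) :
    spectralVal v p ≤ r ↔ ∀ i < p.natDegree, v (p.coeff i) ≤ r ^ (p.natDegree - i) := by
  simp only [spectralVal, Finset.sup_le_iff, Finset.mem_range]
  refine forall₂_congr fun i hi => ?_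
  rw [NNReal.rpow_inv_le_iff (by simpa using hi), NNReal.rpow_natCast]

theorem spectralVal_le_iff_gaussNorm_le {v : K → NNReal} {w : AbsoluteValue K ℝ}
    (hvw : ∀ a, (v a : ℝ) = w a) {p : K[X]} (hp : p.Monic) {r : NNReal} (hr : 0 < r) :
    spectralVal v p ≤ r ↔ p.gaussNorm w r ≤ (r : ℝ) ^ p.natDegree := by
  rw [spectralVal_le_iff, gaussNorm_le_iff_s11 w r.coe_nonneg]
  have hv0 : v 0 = 0 := by exact_mod_cast (hvw 0).trans w.map_zero
  have hv1 : v 1 = 1 := by exact_mod_cast (hvw 1).trans w.map_one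
  have hterm : ∀ i, w (p.coeff i) * (r : ℝ) ^ i ≤ (r : ℝ) ^ p.natDegree ↔
      (i < p.natDegree → v (p.coeff i) ≤ r ^ (p.natDegree - i)) := by
    intro i
    rw [← hvw]
    norm_cast
    rcases lt_trichotomy i p.natDegree with hi | rfl | hi
    · rw [← pow_sub_mul_pow r hi.le, mul_le_mul_iff_left₀ (pow_pos hr i)]
      exact (imp_iff_right hi).symm
    · simp [hp.coeff_natDegree, hv1]
    · simp [coeff_eq_zero_of_natDegree_lt hi, hv0, hi.not_gt]
  exact (forall_congr' hterm).symm

theorem spectralVal_pow {v : K → NNReal} {w : AbsoluteValue K ℝ} (hw : IsNonarchimedean w)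
    (hvw : ∀ a, (v a : ℝ) = w a) {p : K[X]} (hp : p.Monic) {e : ℕ} (he : e ≠ 0) :
    spectralVal v (p ^ e) = spectralVal v p := by
  refine NNReal.eq_of_forall_pos_le_iff_s11 fun r hr => ?_
  rw [spectralVal_le_iff_gaussNorm_le hvw (hp.pow e) hr, spectralVal_le_iff_gaussNorm_le hvw hp hr,
    gaussNorm_pow hw (by exact_mod_cast hr), hp.natDegree_pow, mul_comm, pow_mul]
  exact pow_le_pow_iff_left₀ (gaussNorm_nonneg _ _ r.coe_nonneg) (by positivity) he

end Polynomial

/-- For a finite field extension `L/K` of a nonarchimedean valued field and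
`x ∈ L`, the spectral value of the characteristic polynomial of multiplication
by `x` equals the spectral value of the minimal polynomial of `x` over `K`
(i.e., the spectral norm of `x`). -/
theorem spectralVal_charpoly_eq_spectralVal_minpoly (K L : Type*) [Field K]
    [Field L] [Algebra K L] [FiniteDimensional K L] (v : K → NNReal)
    (hv0 : ∀ a, v a = 0 ↔ a = 0)
    (hvmul : ∀ a b, v (a * b) = v a * v b)
    (hvadd : ∀ a b, v (a + b) ≤ max (v a) (v b)) (x : L) :
    spectralVal v (LinearMap.charpoly (LinearMap.mulLeft K x)) =
      spectralVal v (minpoly K x) := by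
  rw [LinearMap.charpoly_mulLeft_eq_minpoly_pow]
  exact spectralVal_pow (AbsoluteValue.isNonarchimedean_ofNonarchimedean v hv0 hvmul hvadd)
    (fun _ => rfl) (minpoly.monic (IsIntegral.of_finite K x)) Module.finrank_pos.ne'
end
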